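/- arXiv:2408.07025 — 6 statements merged into one kernel-verified Lean document; each statement's English description precedes it below -/
import Mathlib

section
/- If a copula C satisfies C(u,v) = u - C(u,1-v) for all (u,v) in [0,1]^2, and (U,V) is a random vector with distribution function C, then Kendall's tau τ = 4E[C(U,V)] - 1 equals zero. -/
open MeasureTheory

/-- Clamp a real number into `[0,1]`. -/
noncomputable def kclamp (x : ℝ) : ℝ := max 0 (min 1 x)

lemma kclamp_mem (x : ℝ) : kclamp x ∈ Set.Icc (0:ℝ) 1 :=
  ⟨le_max_left _ _, max_le zero_le_one (min_le_left _ _)⟩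

lemma kclamp_id {x : ℝ} (hx : x ∈ Set.Icc (0:ℝ) 1) : kclamp x = x := by
  unfold kclamp
  rw [min_eq_right hx.2, max_eq_right hx.1]

lemma kclamp_lip (x y : ℝ) : |kclamp x - kclamp y| ≤ |x - y| := by
  unfold kclamp
  rw [max_comm 0 (min 1 x), max_comm 0 (min 1 y)]
  refine (abs_max_sub_max_le_abs _ _ _).trans ?_
  refine (abs_min_sub_min_le_max 1 x 1 y).trans ?_
  simp

lemma kclamp_mono : Monotone kclamp := fun x y h => by
  unfold kclamp
  exact max_le_max le_rfl (min_le_min le_rfl h)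

lemma kclamp_one_sub (x : ℝ) : kclamp (1 - x) = 1 - kclamp x := by
  unfold kclamp
  rcases le_total x 0 with h | h
  · rw [min_eq_right (by linarith : x ≤ (1:ℝ)), max_eq_left h,
      min_eq_left (by linarith : (1:ℝ) ≤ 1 - x), max_eq_right zero_le_one]
    ring
  · rcases le_total x 1 with h1 | h1
    · rw [min_eq_right h1, max_eq_right h, min_eq_right (by linarith : 1 - x ≤ (1:ℝ)),
        max_eq_right (by linarith : (0:ℝ) ≤ 1 - x)]
    · rw [min_eq_left h1, max_eq_right zero_le_one,
        min_eq_right (by linarith : 1 - x ≤ (1:ℝ)), max_eq_left (by linarith : 1 - x ≤ (0:ℝ))]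
      ring

/-- The continuous extension of a copula to the whole plane, by clamping. -/
noncomputable def Dext (C : ℝ → ℝ → ℝ) : ℝ × ℝ → ℝ := fun p => C (kclamp p.1) (kclamp p.2)

/-- A (bivariate) copula: grounded, uniform marginals, and 2-increasing on `[0,1]²`. -/
def IsCopula (C : ℝ → ℝ → ℝ) : Prop :=
  (∀ u ∈ Set.Icc (0:ℝ) 1, C u 0 = 0 ∧ C 0 u = 0 ∧ C u 1 = u ∧ C 1 u = u) ∧
  (∀ u₁ ∈ Set.Icc (0:ℝ) 1, ∀ u₂ ∈ Set.Icc (0:ℝ) 1, ∀ v₁ ∈ Set.Icc (0:ℝ) 1,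
    ∀ v₂ ∈ Set.Icc (0:ℝ) 1, u₁ ≤ u₂ → v₁ ≤ v₂ →
      0 ≤ C u₂ v₂ - C u₂ v₁ - C u₁ v₂ + C u₁ v₁)

/-- If the copula `C` satisfies `C(u,v) = u - C(u,1-v)` on `[0,1]²` and `(U,V)` is a random
vector with distribution function `C`, then Kendall's tau `τ = 4E[C(U,V)] - 1` is zero. -/
theorem kendall_tau_eq_zero_of_hSymmetric
    {Ω : Type*} [MeasurableSpace Ω] (μ : Measure Ω) [IsProbabilityMeasure μ]
    (U V : Ω → ℝ) (hU : Measurable U) (hV : Measurable V)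
    (C : ℝ → ℝ → ℝ) (hC : IsCopula C)
    (hsym : ∀ u ∈ Set.Icc (0:ℝ) 1, ∀ v ∈ Set.Icc (0:ℝ) 1, C u v = u - C u (1 - v))
    (hrange : ∀ᵐ ω ∂μ, U ω ∈ Set.Icc (0:ℝ) 1 ∧ V ω ∈ Set.Icc (0:ℝ) 1)
    (hdf : ∀ u ∈ Set.Icc (0:ℝ) 1, ∀ v ∈ Set.Icc (0:ℝ) 1,
      (μ {ω | U ω ≤ u ∧ V ω ≤ v}).toReal = C u v) :
    4 * (∫ ω, C (U ω) (V ω) ∂μ) - 1 = 0 := by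
  obtain ⟨hg, h2⟩ := hC
  have h00 : (0:ℝ) ∈ Set.Icc (0:ℝ) 1 := ⟨le_refl 0, zero_le_one⟩
  have h11 : (1:ℝ) ∈ Set.Icc (0:ℝ) 1 := ⟨zero_le_one, le_refl 1⟩
  -- monotonicity and Lipschitz estimates for the copula
  have hmonov : ∀ u ∈ Set.Icc (0:ℝ) 1, ∀ v₁ ∈ Set.Icc (0:ℝ) 1, ∀ v₂ ∈ Set.Icc (0:ℝ) 1,
      v₁ ≤ v₂ → C u v₁ ≤ C u v₂ := by
    intro u hu v₁ hv₁ v₂ hv₂ h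
    have h' := h2 0 h00 u hu v₁ hv₁ v₂ hv₂ hu.1 h
    have e1 := (hg v₁ hv₁).2.1
    have e2 := (hg v₂ hv₂).2.1
    linarith
  have hmonou : ∀ u₁ ∈ Set.Icc (0:ℝ) 1, ∀ u₂ ∈ Set.Icc (0:ℝ) 1, ∀ v ∈ Set.Icc (0:ℝ) 1,
      u₁ ≤ u₂ → C u₁ v ≤ C u₂ v := by
    intro u₁ hu₁ u₂ hu₂ v hv h
    have h' := h2 u₁ hu₁ u₂ hu₂ 0 h00 v hv h hv.1
    have e1 := (hg u₁ hu₁).1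
    have e2 := (hg u₂ hu₂).1
    linarith
  have hlipv : ∀ u ∈ Set.Icc (0:ℝ) 1, ∀ v₁ ∈ Set.Icc (0:ℝ) 1, ∀ v₂ ∈ Set.Icc (0:ℝ) 1,
      v₁ ≤ v₂ → C u v₂ - C u v₁ ≤ v₂ - v₁ := by
    intro u hu v₁ hv₁ v₂ hv₂ h
    have h' := h2 u hu 1 h11 v₁ hv₁ v₂ hv₂ hu.2 h
    have e1 := (hg v₁ hv₁).2.2.2
    have e2 := (hg v₂ hv₂).2.2.2
    linarith
  have hlipu : ∀ u₁ ∈ Set.Icc (0:ℝ) 1, ∀ u₂ ∈ Set.Icc (0:ℝ) 1, ∀ v ∈ Set.Icc (0:ℝ) 1,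
      u₁ ≤ u₂ → C u₂ v - C u₁ v ≤ u₂ - u₁ := by
    intro u₁ hu₁ u₂ hu₂ v hv h
    have h' := h2 u₁ hu₁ u₂ hu₂ v hv 1 h11 h hv.2
    have e1 := (hg u₁ hu₁).2.2.1
    have e2 := (hg u₂ hu₂).2.2.1
    linarith
  have hnn : ∀ u ∈ Set.Icc (0:ℝ) 1, ∀ v ∈ Set.Icc (0:ℝ) 1, 0 ≤ C u v := by
    intro u hu v hv
    have h' := hmonov u hu 0 h00 v hv hv.1
    have e := (hg u hu).1
    linarith
  have hle : ∀ u ∈ Set.Icc (0:ℝ) 1, ∀ v ∈ Set.Icc (0:ℝ) 1, C u v ≤ u := by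
    intro u hu v hv
    have h' := hmonov u hu v hv 1 h11 hv.2
    have e := (hg u hu).2.2.1
    linarith
  have hlip : ∀ u ∈ Set.Icc (0:ℝ) 1, ∀ v ∈ Set.Icc (0:ℝ) 1, ∀ u' ∈ Set.Icc (0:ℝ) 1,
      ∀ v' ∈ Set.Icc (0:ℝ) 1, |C u v - C u' v'| ≤ |u - u'| + |v - v'| := by
    intro u hu v hv u' hu' v' hv'
    have hau : |C u v - C u' v| ≤ |u - u'| := by
      rcases le_total u u' with h | h
      · rw [abs_sub_comm (C u v), abs_sub_comm u]
        rw [abs_of_nonneg (sub_nonneg.mpr (hmonou u hu u' hu' v hv h))]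
        exact (hlipu u hu u' hu' v hv h).trans (le_abs_self _)
      · rw [abs_of_nonneg (sub_nonneg.mpr (hmonou u' hu' u hu v hv h))]
        exact (hlipu u' hu' u hu v hv h).trans (le_abs_self _)
    have hav : |C u' v - C u' v'| ≤ |v - v'| := by
      rcases le_total v v' with h | h
      · rw [abs_sub_comm (C u' v), abs_sub_comm v]
        rw [abs_of_nonneg (sub_nonneg.mpr (hmonov u' hu' v hv v' hv' h))]
        exact (hlipv u' hu' v hv v' hv' h).trans (le_abs_self _)
      · rw [abs_of_nonneg (sub_nonneg.mpr (hmonov u' hu' v' hv' v hv h))]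
        exact (hlipv u' hu' v' hv' v hv h).trans (le_abs_self _)
    calc |C u v - C u' v'| ≤ |C u v - C u' v| + |C u' v - C u' v'| := abs_sub_le _ _ _
      _ ≤ |u - u'| + |v - v'| := add_le_add hau hav
  -- continuity of the clamped extension
  have hDcont : Continuous (Dext C) := by
    have hL : LipschitzWith 2 (Dext C) := by
      apply LipschitzWith.of_dist_le_mul
      intro p q
      have h1 : |p.1 - q.1| ≤ dist p q := by
        rw [Prod.dist_eq, Real.dist_eq, Real.dist_eq]; exact le_max_left _ _
      have h2' : |p.2 - q.2| ≤ dist p q := by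
        rw [Prod.dist_eq, Real.dist_eq, Real.dist_eq]; exact le_max_right _ _
      have hb := hlip _ (kclamp_mem p.1) _ (kclamp_mem p.2) _ (kclamp_mem q.1) _ (kclamp_mem q.2)
      have hd : dist (Dext C p) (Dext C q) ≤ 2 * dist p q := by
        rw [Real.dist_eq]
        calc |Dext C p - Dext C q| ≤ |kclamp p.1 - kclamp q.1| + |kclamp p.2 - kclamp q.2| := hb
          _ ≤ |p.1 - q.1| + |p.2 - q.2| := add_le_add (kclamp_lip _ _) (kclamp_lip _ _)
          _ ≤ dist p q + dist p q := add_le_add h1 h2'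
          _ = 2 * dist p q := by ring
      simpa using hd
    exact hL.continuous
  -- a.e. strict range facts
  have haeV1 : ∀ᵐ ω ∂μ, V ω ≤ 1 := hrange.mono fun ω h => h.2.2
  have haeU1 : ∀ᵐ ω ∂μ, U ω ≤ 1 := hrange.mono fun ω h => h.1.2
  have hzero : ∀ a ∈ Set.Icc (0:ℝ) 1, ∀ b ∈ Set.Icc (0:ℝ) 1, C a b = 0 →
      μ {ω | U ω ≤ a ∧ V ω ≤ b} = 0 := by
    intro a ha b hb h0
    have h2' : (μ {ω | U ω ≤ a ∧ V ω ≤ b}).toReal = 0 := by rw [hdf a ha b hb]; exact h0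
    exact ((ENNReal.toReal_eq_zero_iff _).mp h2').resolve_right (measure_ne_top μ _)
  have hU0 : μ {ω | U ω ≤ 0} = 0 := by
    have h1 : μ {ω | U ω ≤ 0} = μ {ω | U ω ≤ 0 ∧ V ω ≤ 1} := by
      apply measure_congr
      rw [Filter.eventuallyEq_set]
      filter_upwards [haeV1] with ω h
      exact ⟨fun hu => ⟨hu, h⟩, fun h' => h'.1⟩
    rw [h1]
    exact hzero 0 h00 1 h11 (hg 1 h11).2.1
  have hV0 : μ {ω | V ω ≤ 0} = 0 := by
    have h1 : μ {ω | V ω ≤ 0} = μ {ω | U ω ≤ 1 ∧ V ω ≤ 0} := by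
      apply measure_congr
      rw [Filter.eventuallyEq_set]
      filter_upwards [haeU1] with ω h
      exact ⟨fun hv => ⟨h, hv⟩, fun h' => h'.2⟩
    rw [h1]
    exact hzero 1 h11 0 h00 (hg 1 h11).1
  have hr : ∀ᵐ ω ∂μ, 0 < U ω ∧ U ω ≤ 1 ∧ 0 < V ω ∧ V ω ≤ 1 := by
    have hU' : ∀ᵐ ω ∂μ, 0 < U ω := by
      rw [MeasureTheory.ae_iff]; simpa [not_lt] using hU0
    have hV' : ∀ᵐ ω ∂μ, 0 < V ω := by
      rw [MeasureTheory.ae_iff]; simpa [not_lt] using hV0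
    filter_upwards [hU', hV', haeU1, haeV1] with ω h1 h2 h3 h4
    exact ⟨h1, h3, h2, h4⟩
  -- the distribution function in terms of the clamped copula
  have hiff : ∀ (x a : ℝ), 0 < x → x ≤ 1 → (x ≤ a ↔ x ≤ kclamp a) := by
    intro x a hx hx1
    unfold kclamp
    constructor
    · intro h; exact le_max_of_le_right (le_min hx1 h)
    · intro h
      rcases le_or_gt (min 1 a) 0 with hm | hm
      · rw [max_eq_left hm] at h; linarith
      · rw [max_eq_right hm.le] at h; exact h.trans (min_le_right _ _)
  have G : ∀ a b : ℝ, μ {ω | U ω ≤ a ∧ V ω ≤ b}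
      = ENNReal.ofReal (C (kclamp a) (kclamp b)) := by
    intro a b
    have hcongr : μ {ω | U ω ≤ a ∧ V ω ≤ b} = μ {ω | U ω ≤ kclamp a ∧ V ω ≤ kclamp b} := by
      apply measure_congr
      rw [Filter.eventuallyEq_set]
      filter_upwards [hr] with ω ⟨hu0, hu1, hv0, hv1⟩
      rw [← hiff _ a hu0 hu1, ← hiff _ b hv0 hv1]
    rw [hcongr, ← hdf _ (kclamp_mem a) _ (kclamp_mem b),
      ENNReal.ofReal_toReal (measure_ne_top μ _)]
  have hmarg : ∀ a : ℝ, μ {ω | U ω ≤ a} = ENNReal.ofReal (kclamp a) := by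
    intro a
    have h1 : μ {ω | U ω ≤ a} = μ {ω | U ω ≤ a ∧ V ω ≤ 1} := by
      apply measure_congr
      rw [Filter.eventuallyEq_set]
      filter_upwards [hr] with ω ⟨_, _, _, hv1⟩
      exact ⟨fun hu => ⟨hu, hv1⟩, fun h' => h'.1⟩
    rw [h1, G a 1, kclamp_id h11]
    congr 1
    exact (hg _ (kclamp_mem a)).2.2.1
  have Glt : ∀ a b : ℝ, μ {ω | U ω ≤ a ∧ V ω < b}
      = ENNReal.ofReal (C (kclamp a) (kclamp b)) := by
    intro a b
    have hun : {ω | U ω ≤ a ∧ V ω < b} = ⋃ n : ℕ, {ω | U ω ≤ a ∧ V ω ≤ b - 1/(n+1)} := by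
      ext ω
      simp only [Set.mem_setOf_eq, Set.mem_iUnion]
      constructor
      · rintro ⟨hh1, hh2⟩
        obtain ⟨n, hn⟩ := exists_nat_one_div_lt (sub_pos.mpr hh2)
        exact ⟨n, hh1, by linarith⟩
      · rintro ⟨n, hh1, hh2⟩
        refine ⟨hh1, lt_of_le_of_lt hh2 ?_⟩
        have : (0:ℝ) < 1/(n+1) := by positivity
        linarith
    have hmonos : Monotone (fun n : ℕ => {ω | U ω ≤ a ∧ V ω ≤ b - 1/(n+1)}) := by
      intro m n hmn ω hω
      refine ⟨hω.1, hω.2.trans ?_⟩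
      have hmn' : (m:ℝ) + 1 ≤ (n:ℝ) + 1 := by exact_mod_cast Nat.succ_le_succ hmn
      have : (1:ℝ)/(n+1) ≤ 1/(m+1) := one_div_le_one_div_of_le (by positivity) hmn'
      linarith
    rw [hun, (hmonos.directed_le).measure_iUnion]
    simp_rw [G]
    have hmono2 : Monotone (fun n : ℕ =>
        ENNReal.ofReal (C (kclamp a) (kclamp (b - 1/(n+1))))) := by
      intro m n hmn
      apply ENNReal.ofReal_le_ofReal
      apply hmonov _ (kclamp_mem a) _ (kclamp_mem _) _ (kclamp_mem _)
      apply kclamp_mono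
      have hmn' : (m:ℝ) + 1 ≤ (n:ℝ) + 1 := by exact_mod_cast Nat.succ_le_succ hmn
      have : (1:ℝ)/(n+1) ≤ 1/(m+1) := one_div_le_one_div_of_le (by positivity) hmn'
      linarith
    have htendR : Filter.Tendsto (fun n : ℕ => C (kclamp a) (kclamp (b - 1/(n+1))))
        Filter.atTop (nhds (C (kclamp a) (kclamp b))) := by
      rw [tendsto_iff_dist_tendsto_zero]
      apply squeeze_zero (fun n => dist_nonneg) (g := fun n : ℕ => 1/(n+1))
      · intro n
        rw [Real.dist_eq]
        have hb := hlip _ (kclamp_mem a) _ (kclamp_mem (b - 1/(n+1))) _ (kclamp_mem a)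
          _ (kclamp_mem b)
        have hpos : (0:ℝ) < 1/(n+1) := by positivity
        calc |C (kclamp a) (kclamp (b - 1/(n+1))) - C (kclamp a) (kclamp b)|
            ≤ |kclamp a - kclamp a| + |kclamp (b - 1/(n+1)) - kclamp b| := hb
          _ ≤ 0 + |b - 1/(n+1) - b| := by
              rw [sub_self, abs_zero]
              exact add_le_add le_rfl (kclamp_lip _ _)
          _ = 1/(n+1) := by rw [zero_add]; rw [show b - 1/((n:ℝ)+1) - b = -(1/(n+1)) by ring,
              abs_neg, abs_of_pos hpos]
      · exact tendsto_one_div_add_atTop_nhds_zero_nat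
    have htend := (ENNReal.continuous_ofReal.tendsto _).comp htendR
    exact tendsto_nhds_unique (tendsto_atTop_iSup hmono2) htend
  -- equality of the two joint laws
  have hT₁ : Measurable fun ω => (U ω, V ω) := hU.prodMk hV
  have hT₂ : Measurable fun ω => (U ω, 1 - V ω) := hU.prodMk (measurable_const.sub hV)
  have key : μ.map (fun ω => (U ω, V ω)) = μ.map (fun ω => (U ω, 1 - V ω)) := by
    have hspan : IsCountablySpanning (Set.range (Set.Iic : ℝ → Set ℝ)) := by
      refine ⟨fun n => Set.Iic n, fun n => ⟨n, rfl⟩, ?_⟩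
      ext x
      simp only [Set.mem_iUnion, Set.mem_Iic, Set.mem_univ, iff_true]
      exact exists_nat_ge x
    have hR : (inferInstance : MeasurableSpace ℝ)
        = MeasurableSpace.generateFrom (Set.range Set.Iic) :=
      BorelSpace.measurable_eq.trans (borel_eq_generateFrom_Iic ℝ)
    have hgen : (inferInstance : MeasurableSpace (ℝ × ℝ)) =
        MeasurableSpace.generateFrom
          (Set.image2 (· ×ˢ ·) (Set.range (Set.Iic : ℝ → Set ℝ))
            (Set.range (Set.Iic : ℝ → Set ℝ))) := by
      rw [← generateFrom_prod_eq hspan hspan, ← hR]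
    have hpi : IsPiSystem
        (Set.image2 (· ×ˢ ·) (Set.range (Set.Iic : ℝ → Set ℝ))
          (Set.range (Set.Iic : ℝ → Set ℝ))) := by
      rintro _ ⟨_, ⟨a, rfl⟩, _, ⟨b, rfl⟩, rfl⟩ _ ⟨_, ⟨c, rfl⟩, _, ⟨d, rfl⟩, rfl⟩ -
      rw [Set.prod_inter_prod, Set.Iic_inter_Iic, Set.Iic_inter_Iic]
      exact ⟨_, ⟨_, rfl⟩, _, ⟨_, rfl⟩, rfl⟩
    haveI : IsProbabilityMeasure (μ.map fun ω => (U ω, V ω)) :=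
      Measure.isProbabilityMeasure_map hT₁.aemeasurable
    haveI : IsProbabilityMeasure (μ.map fun ω => (U ω, 1 - V ω)) :=
      Measure.isProbabilityMeasure_map hT₂.aemeasurable
    refine ext_of_generate_finite _ hgen hpi ?_ (by simp)
    rintro _ ⟨_, ⟨a, rfl⟩, _, ⟨b, rfl⟩, rfl⟩
    rw [Measure.map_apply hT₁ (measurableSet_Iic.prod measurableSet_Iic),
        Measure.map_apply hT₂ (measurableSet_Iic.prod measurableSet_Iic)]
    have hp1 : (fun ω => (U ω, V ω)) ⁻¹' (Set.Iic a ×ˢ Set.Iic b)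
        = {ω | U ω ≤ a ∧ V ω ≤ b} := by
      ext ω; simp [Set.mem_prod]
    have hp2 : (fun ω => (U ω, 1 - V ω)) ⁻¹' (Set.Iic a ×ˢ Set.Iic b)
        = {ω | U ω ≤ a ∧ 1 - b ≤ V ω} := by
      ext ω
      simp only [Set.mem_preimage, Set.mem_prod, Set.mem_Iic, Set.mem_setOf_eq]
      constructor
      · rintro ⟨hh1, hh2⟩; exact ⟨hh1, by linarith⟩
      · rintro ⟨hh1, hh2⟩; exact ⟨hh1, by linarith⟩
    rw [hp1, hp2, G a b]
    set ca := kclamp a with hca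
    set cb := kclamp b with hcb
    have hmca := kclamp_mem a
    have hmcb := kclamp_mem b
    have hm1cb : 1 - cb ∈ Set.Icc (0:ℝ) 1 := ⟨by linarith [hmcb.2], by linarith [hmcb.1]⟩
    have hunion : {ω | U ω ≤ a ∧ V ω < 1 - b} ∪ {ω | U ω ≤ a ∧ 1 - b ≤ V ω}
        = {ω | U ω ≤ a} := by
      ext ω
      simp only [Set.mem_union, Set.mem_setOf_eq]
      constructor
      · rintro (⟨h1, _⟩ | ⟨h1, _⟩) <;> exact h1
      · intro h1
        rcases lt_or_ge (V ω) (1 - b) with h | h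
        · exact Or.inl ⟨h1, h⟩
        · exact Or.inr ⟨h1, h⟩
    have hdisj : Disjoint {ω | U ω ≤ a ∧ V ω < 1 - b} {ω | U ω ≤ a ∧ 1 - b ≤ V ω} := by
      rw [Set.disjoint_left]
      rintro ω ⟨_, hh2⟩ ⟨_, hh4⟩
      exact absurd hh4 (not_le.mpr hh2)
    have hms : MeasurableSet {ω | U ω ≤ a ∧ 1 - b ≤ V ω} := by
      have hseteq : {ω | U ω ≤ a ∧ 1 - b ≤ V ω}
          = {ω | U ω ≤ a} ∩ {ω | 1 - b ≤ V ω} := rfl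
      rw [hseteq]
      exact (measurableSet_le hU measurable_const).inter (measurableSet_le measurable_const hV)
    have hsplit := measure_union (μ := μ) hdisj hms
    rw [hunion] at hsplit
    rw [hmarg a, Glt a (1 - b), kclamp_one_sub b, ← hca, ← hcb] at hsplit
    have hid : ca = C ca (1 - cb) + C ca cb := by
      have := hsym ca hmca cb hmcb
      linarith
    have heq : ENNReal.ofReal ca
        = ENNReal.ofReal (C ca (1 - cb)) + ENNReal.ofReal (C ca cb) := by
      rw [← ENNReal.ofReal_add (hnn _ hmca _ hm1cb) (hnn _ hmca _ hmcb), ← hid]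
    rw [heq] at hsplit
    exact (ENNReal.add_right_inj ENNReal.ofReal_ne_top).mp hsplit
  -- law of U is uniform on [0,1], so E[U] = 1/2
  have hlaw : μ.map U = volume.restrict (Set.Icc (0:ℝ) 1) := by
    haveI := Measure.isProbabilityMeasure_map (μ := μ) (f := U) hU.aemeasurable
    apply Measure.ext_of_Iic
    intro a
    rw [Measure.map_apply hU measurableSet_Iic]
    have hpre : U ⁻¹' Set.Iic a = {ω | U ω ≤ a} := rfl
    rw [hpre, hmarg a, Measure.restrict_apply measurableSet_Iic]
    have hset : Set.Iic a ∩ Set.Icc (0:ℝ) 1 = Set.Icc 0 (min a 1) := by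
      ext x
      simp only [Set.mem_inter_iff, Set.mem_Iic, Set.mem_Icc, le_min_iff]
      tauto
    rw [hset, Real.volume_Icc, sub_zero]
    unfold kclamp
    rw [min_comm a 1]
    rcases le_total (min 1 a) 0 with h | h
    · rw [max_eq_left h, ENNReal.ofReal_of_nonpos h, ENNReal.ofReal_zero]
    · rw [max_eq_right h]
  have hEU : ∫ ω, U ω ∂μ = 1/2 := by
    have h1 : ∫ ω, U ω ∂μ = ∫ x, x ∂(μ.map U) :=
      (integral_map hU.aemeasurable aestronglyMeasurable_id).symm
    rw [h1, hlaw, MeasureTheory.integral_Icc_eq_integral_Ioc,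
      ← intervalIntegral.integral_of_le zero_le_one, integral_id]
    norm_num
  -- integrability
  have hD01 : ∀ p : ℝ × ℝ, Dext C p ∈ Set.Icc (0:ℝ) 1 := by
    intro p
    refine ⟨hnn _ (kclamp_mem p.1) _ (kclamp_mem p.2), ?_⟩
    exact (hle _ (kclamp_mem p.1) _ (kclamp_mem p.2)).trans (kclamp_mem p.1).2
  have hbound : ∀ p : ℝ × ℝ, ‖Dext C p‖ ≤ 1 := by
    intro p
    rw [Real.norm_eq_abs]
    exact abs_le.mpr ⟨by linarith [(hD01 p).1], (hD01 p).2⟩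
  have hInt1 : Integrable (fun ω => Dext C (U ω, V ω)) μ := by
    apply Integrable.mono' (integrable_const 1)
      (hDcont.measurable.comp hT₁).aestronglyMeasurable
    exact Filter.Eventually.of_forall fun ω => hbound _
  have hInt2 : Integrable (fun ω => Dext C (U ω, 1 - V ω)) μ := by
    apply Integrable.mono' (integrable_const 1)
      (hDcont.measurable.comp hT₂).aestronglyMeasurable
    exact Filter.Eventually.of_forall fun ω => hbound _
  -- transfer the integral through the equal laws
  have hint : ∫ ω, Dext C (U ω, V ω) ∂μ = ∫ ω, Dext C (U ω, 1 - V ω) ∂μ := by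
    rw [← integral_map hT₁.aemeasurable hDcont.aestronglyMeasurable, key,
      integral_map hT₂.aemeasurable hDcont.aestronglyMeasurable]
  have hsum : ∫ ω, U ω ∂μ
      = ∫ ω, Dext C (U ω, V ω) ∂μ + ∫ ω, Dext C (U ω, 1 - V ω) ∂μ := by
    rw [← integral_add hInt1 hInt2]
    apply integral_congr_ae
    filter_upwards [hrange] with ω ⟨hu, hv⟩
    have h1v : (1 - V ω) ∈ Set.Icc (0:ℝ) 1 := ⟨by linarith [hv.2], by linarith [hv.1]⟩
    simp only [Dext]
    rw [kclamp_id hu, kclamp_id hv, kclamp_id h1v]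
    have := hsym (U ω) hu (V ω) hv
    linarith
  have hfinal : ∫ ω, C (U ω) (V ω) ∂μ = ∫ ω, Dext C (U ω, V ω) ∂μ := by
    apply integral_congr_ae
    filter_upwards [hrange] with ω ⟨hu, hv⟩
    simp only [Dext]
    rw [kclamp_id hu, kclamp_id hv]
  rw [hfinal]
  rw [hEU, hint] at hsum
  linarith
end

section
/- If (Y,Z) has continuous marginals, unique copula C, and is h-symmetric about some b (i.e. (Y,Z-b) =_d (Y,b-Z)), then C(u,v) = u - C(u,1-v) for all (u,v) in [0,1]^2. -/
open MeasureTheory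

lemma cdf_map_eq {Ω : Type*} [MeasurableSpace Ω] (μ : Measure Ω) [IsProbabilityMeasure μ]
    (Z : Ω → ℝ) (hZ : Measurable Z) (z : ℝ) :
    ProbabilityTheory.cdf (μ.map Z) z = (μ {ω | Z ω ≤ z}).toReal := by
  have : IsProbabilityMeasure (μ.map Z) := Measure.isProbabilityMeasure_map hZ.aemeasurable
  rw [ProbabilityTheory.cdf_eq_real, Measure.real, Measure.map_apply hZ measurableSet_Iic]
  rfl

lemma no_atom_of_continuous_cdf {Ω : Type*} [MeasurableSpace Ω] (μ : Measure Ω)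
    [IsProbabilityMeasure μ] (Z : Ω → ℝ) (hZ : Measurable Z)
    (hFc : Continuous fun z => (μ {ω | Z ω ≤ z}).toReal) (c : ℝ) :
    μ {ω | Z ω = c} = 0 := by
  have : IsProbabilityMeasure (μ.map Z) := Measure.isProbabilityMeasure_map hZ.aemeasurable
  have hcdf : ∀ z, ProbabilityTheory.cdf (μ.map Z) z = (μ {ω | Z ω ≤ z}).toReal :=
    cdf_map_eq μ Z hZ
  have hcont : Continuous fun z => ProbabilityTheory.cdf (μ.map Z) z := by
    simpa only [hcdf] using hFc
  have hmap : (μ.map Z) {c} = 0 := by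
    conv_lhs => rw [← ProbabilityTheory.measure_cdf (μ.map Z)]
    rw [StieltjesFunction.measure_singleton]
    have hl : Function.leftLim (ProbabilityTheory.cdf (μ.map Z)) c
        = ProbabilityTheory.cdf (μ.map Z) c := by
      exact leftLim_eq_of_tendsto
        ((hcont.tendsto c).mono_left nhdsWithin_le_nhds)
    rw [hl, sub_self, ENNReal.ofReal_zero]
  have : μ (Z ⁻¹' {c}) = 0 := by
    rw [← Measure.map_apply hZ (measurableSet_singleton c)]; exact hmap
  simpa [Set.preimage, Set.mem_singleton_iff] using this

lemma exists_eq_of_cdf {F : ℝ → ℝ} (hc : Continuous F) (hbot : Filter.Tendsto F Filter.atBot (nhds 0))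
    (htop : Filter.Tendsto F Filter.atTop (nhds 1)) {u : ℝ} (h0 : 0 < u) (h1 : u < 1) :
    ∃ y, F y = u := by
  obtain ⟨a, ha⟩ := (hbot.eventually_lt_const h0).exists
  obtain ⟨d, hd⟩ := (htop.eventually_const_lt h1).exists
  exact intermediate_value_univ a d hc ⟨ha.le, hd.le⟩

/-- If `(Y,Z)` has continuous marginals, copula `C` (in the sense of Sklar's theorem)
and is h-symmetric about some `b`, then `C(u,v) = u - C(u,1-v)` on `[0,1]²`. -/
theorem copula_hSymmetric_of_hSymmetric
    {Ω : Type*} [MeasurableSpace Ω] (μ : Measure Ω) [IsProbabilityMeasure μ]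
    (Y Z : Ω → ℝ) (hY : Measurable Y) (hZ : Measurable Z) (b : ℝ)
    (hsym : μ.map (fun ω => (Y ω, Z ω - b)) = μ.map (fun ω => (Y ω, b - Z ω)))
    (hFYc : Continuous fun y => (μ {ω | Y ω ≤ y}).toReal)
    (hFZc : Continuous fun z => (μ {ω | Z ω ≤ z}).toReal)
    (C : ℝ → ℝ → ℝ) (hC : IsCopula C)
    (hSklar : ∀ y z : ℝ, (μ {ω | Y ω ≤ y ∧ Z ω ≤ z}).toReal
      = C ((μ {ω | Y ω ≤ y}).toReal) ((μ {ω | Z ω ≤ z}).toReal)) :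
    ∀ u ∈ Set.Icc (0:ℝ) 1, ∀ v ∈ Set.Icc (0:ℝ) 1, C u v = u - C u (1 - v) := by
  obtain ⟨hB, _⟩ := hC
  -- measurability facts
  have hmeas1 : Measurable fun ω => (Y ω, Z ω - b) := hY.prodMk (hZ.sub measurable_const)
  have hmeas2 : Measurable fun ω => (Y ω, b - Z ω) := hY.prodMk (measurable_const.sub hZ)
  have hatom : ∀ c : ℝ, μ {ω | Z ω = c} = 0 := no_atom_of_continuous_cdf μ Z hZ hFZc
  -- equality of joint probabilities from h-symmetry
  have key : ∀ y z : ℝ, μ {ω | Y ω ≤ y ∧ Z ω ≤ z} = μ {ω | Y ω ≤ y ∧ 2*b - z ≤ Z ω} := by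
    intro y z
    have hS : MeasurableSet {p : ℝ × ℝ | p.1 ≤ y ∧ p.2 ≤ z - b} :=
      (measurableSet_le measurable_fst measurable_const).inter
        (measurableSet_le measurable_snd measurable_const)
    have h := congrArg (fun ν : Measure (ℝ × ℝ) => ν {p : ℝ × ℝ | p.1 ≤ y ∧ p.2 ≤ z - b}) hsym
    rw [Measure.map_apply hmeas1 hS, Measure.map_apply hmeas2 hS] at h
    have e1 : (fun ω => (Y ω, Z ω - b)) ⁻¹' {p : ℝ × ℝ | p.1 ≤ y ∧ p.2 ≤ z - b}
        = {ω | Y ω ≤ y ∧ Z ω ≤ z} := by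
      ext ω; simp only [Set.mem_preimage, Set.mem_setOf_eq]
      constructor <;> rintro ⟨h1, h2⟩ <;> exact ⟨h1, by linarith⟩
    have e2 : (fun ω => (Y ω, b - Z ω)) ⁻¹' {p : ℝ × ℝ | p.1 ≤ y ∧ p.2 ≤ z - b}
        = {ω | Y ω ≤ y ∧ 2*b - z ≤ Z ω} := by
      ext ω; simp only [Set.mem_preimage, Set.mem_setOf_eq]
      constructor <;> rintro ⟨h1, h2⟩ <;> exact ⟨h1, by linarith⟩
    rw [e1, e2] at h; exact h
  have keyZ : ∀ z : ℝ, μ {ω | Z ω ≤ z} = μ {ω | 2*b - z ≤ Z ω} := by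
    intro z
    have hS : MeasurableSet {p : ℝ × ℝ | p.2 ≤ z - b} :=
      measurableSet_le measurable_snd measurable_const
    have h := congrArg (fun ν : Measure (ℝ × ℝ) => ν {p : ℝ × ℝ | p.2 ≤ z - b}) hsym
    rw [Measure.map_apply hmeas1 hS, Measure.map_apply hmeas2 hS] at h
    have e1 : (fun ω => (Y ω, Z ω - b)) ⁻¹' {p : ℝ × ℝ | p.2 ≤ z - b} = {ω | Z ω ≤ z} := by
      ext ω; simp only [Set.mem_preimage, Set.mem_setOf_eq]; constructor <;> intro <;> linarith
    have e2 : (fun ω => (Y ω, b - Z ω)) ⁻¹' {p : ℝ × ℝ | p.2 ≤ z - b} = {ω | 2*b - z ≤ Z ω} := by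
      ext ω; simp only [Set.mem_preimage, Set.mem_setOf_eq]; constructor <;> intro <;> linarith
    rw [e1, e2] at h; exact h
  -- replacing < by ≤ costs nothing
  have hlteq : ∀ (A : Set Ω) (c : ℝ), μ (A ∩ {ω | Z ω ≤ c}) = μ (A ∩ {ω | Z ω < c}) := by
    intro A c
    apply le_antisymm
    · have hsub : A ∩ {ω | Z ω ≤ c} ⊆ (A ∩ {ω | Z ω < c}) ∪ {ω | Z ω = c} := by
        rintro ω ⟨h1, h2⟩
        have h2' : Z ω ≤ c := h2
        rcases h2'.lt_or_eq with h | h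
        · exact Or.inl ⟨h1, h⟩
        · exact Or.inr h
      calc μ (A ∩ {ω | Z ω ≤ c}) ≤ μ ((A ∩ {ω | Z ω < c}) ∪ {ω | Z ω = c}) := measure_mono hsub
        _ ≤ μ (A ∩ {ω | Z ω < c}) + μ {ω | Z ω = c} := measure_union_le _ _
        _ = μ (A ∩ {ω | Z ω < c}) := by rw [hatom c, add_zero]
    · exact measure_mono (Set.inter_subset_inter_right _ fun ω (h : Z ω < c) => le_of_lt h)
  -- splitting
  have hsplit : ∀ (A : Set Ω) (c : ℝ),
      μ (A ∩ {ω | Z ω ≤ c}) + μ (A ∩ {ω | c ≤ Z ω}) = μ A := by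
    intro A c
    rw [hlteq A c]
    have : A ∩ {ω | c ≤ Z ω} = A \ {ω | Z ω < c} := by
      ext ω; simp [not_lt]
    rw [this]
    exact measure_inter_add_diff A (hZ measurableSet_Iio)
  have fin : ∀ S : Set Ω, μ S ≠ ⊤ := fun S => measure_ne_top μ S
  -- real-valued split
  have hsplitR : ∀ (A : Set Ω) (c : ℝ),
      (μ (A ∩ {ω | Z ω ≤ c})).toReal + (μ (A ∩ {ω | c ≤ Z ω})).toReal = (μ A).toReal := by
    intro A c
    rw [← ENNReal.toReal_add (fin _) (fin _), hsplit]
  -- main identity on joint CDF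
  have main : ∀ y z : ℝ, (μ {ω | Y ω ≤ y ∧ Z ω ≤ z}).toReal
      = (μ {ω | Y ω ≤ y}).toReal - (μ {ω | Y ω ≤ y ∧ Z ω ≤ 2*b - z}).toReal := by
    intro y z
    have h1 : {ω | Y ω ≤ y ∧ 2*b - z ≤ Z ω} = {ω | Y ω ≤ y} ∩ {ω | 2*b - z ≤ Z ω} := rfl
    have h2 : {ω | Y ω ≤ y ∧ Z ω ≤ 2*b - z} = {ω | Y ω ≤ y} ∩ {ω | Z ω ≤ 2*b - z} := rfl
    have := hsplitR {ω | Y ω ≤ y} (2*b - z)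
    rw [key y z, h1, h2]
    linarith
  have mainZ : ∀ z : ℝ, (μ {ω | Z ω ≤ 2*b - z}).toReal = 1 - (μ {ω | Z ω ≤ z}).toReal := by
    intro z
    have := hsplitR Set.univ (2*b - z)
    simp only [Set.univ_inter, measure_univ, ENNReal.toReal_one] at this
    rw [keyZ z]
    linarith
  -- the copula identity at points in the range
  have mainC : ∀ y z : ℝ,
      C ((μ {ω | Y ω ≤ y}).toReal) ((μ {ω | Z ω ≤ z}).toReal)
        = (μ {ω | Y ω ≤ y}).toReal
          - C ((μ {ω | Y ω ≤ y}).toReal) (1 - (μ {ω | Z ω ≤ z}).toReal) := by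
    intro y z
    have h := main y z
    rw [hSklar y z, hSklar y (2*b - z), mainZ z] at h
    exact h
  -- surjectivity of the marginal CDFs onto (0,1)
  have instY : IsProbabilityMeasure (μ.map Y) := Measure.isProbabilityMeasure_map hY.aemeasurable
  have instZ : IsProbabilityMeasure (μ.map Z) := Measure.isProbabilityMeasure_map hZ.aemeasurable
  have hYbot : Filter.Tendsto (fun y => (μ {ω | Y ω ≤ y}).toReal) Filter.atBot (nhds 0) := by
    have := ProbabilityTheory.tendsto_cdf_atBot (μ.map Y)
    simpa only [funext (cdf_map_eq μ Y hY)] using this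
  have hYtop : Filter.Tendsto (fun y => (μ {ω | Y ω ≤ y}).toReal) Filter.atTop (nhds 1) := by
    have := ProbabilityTheory.tendsto_cdf_atTop (μ.map Y)
    simpa only [funext (cdf_map_eq μ Y hY)] using this
  have hZbot : Filter.Tendsto (fun z => (μ {ω | Z ω ≤ z}).toReal) Filter.atBot (nhds 0) := by
    have := ProbabilityTheory.tendsto_cdf_atBot (μ.map Z)
    simpa only [funext (cdf_map_eq μ Z hZ)] using this
  have hZtop : Filter.Tendsto (fun z => (μ {ω | Z ω ≤ z}).toReal) Filter.atTop (nhds 1) := by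
    have := ProbabilityTheory.tendsto_cdf_atTop (μ.map Z)
    simpa only [funext (cdf_map_eq μ Z hZ)] using this
  -- finish
  intro u hu v hv
  have hv' : 1 - v ∈ Set.Icc (0:ℝ) 1 := ⟨by linarith [hv.2], by linarith [hv.1]⟩
  rcases eq_or_lt_of_le hu.1 with h0u | h0u
  · rw [← h0u, (hB v hv).2.1, (hB (1-v) hv').2.1]; ring
  rcases eq_or_lt_of_le hu.2 with h1u | h1u
  · rw [h1u, (hB v hv).2.2.2, (hB (1-v) hv').2.2.2]; ring
  rcases eq_or_lt_of_le hv.1 with h0v | h0v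
  · rw [← h0v, (hB u hu).1]
    have : (1:ℝ) - 0 = 1 := by ring
    rw [this, (hB u hu).2.2.1]; ring
  rcases eq_or_lt_of_le hv.2 with h1v | h1v
  · rw [h1v, (hB u hu).2.2.1]
    have : (1:ℝ) - 1 = 0 := by ring
    rw [this, (hB u hu).1]; ring
  obtain ⟨y, hy⟩ := exists_eq_of_cdf hFYc hYbot hYtop h0u h1u
  obtain ⟨z, hz⟩ := exists_eq_of_cdf hFZc hZbot hZtop h0v h1v
  have := mainC y z
  rw [hy, hz] at this
  exact this
end

section
/- Let V: [0,1] → [0,1] be a v-transform with fulcrum δ and generator Ψ, defined by V(u) = (1-u) - (1-δ)Ψ(u/δ) for u ≤ δ and V(u) = u - δΨ^{-1}((1-u)/(1-δ)) for u > δ. If U is uniformly distributed on (0,1), then V(U) is uniformly distributed on (0,1). -/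
open MeasureTheory Set

/-- A v-transform with fulcrum `δ` and generator `Ψ` (with inverse `Φ`) preserves
uniformity: if `U ~ U(0,1)` then `V(U) ~ U(0,1)`. -/
theorem vtransform_preserves_uniformity
    {Ω : Type*} [MeasurableSpace Ω] (μ : Measure Ω) [IsProbabilityMeasure μ]
    (U : Ω → ℝ) (hU : Measurable U)
    (hUunif : μ.map U = volume.restrict (Set.Ioo (0:ℝ) 1))
    (δ : ℝ) (hδ : δ ∈ Set.Ioo (0:ℝ) 1)
    (Ψ Φ : ℝ → ℝ) (hΨc : Continuous Ψ) (hΦc : Continuous Φ)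
    (hΨmono : StrictMonoOn Ψ (Set.Icc 0 1)) (hΨ0 : Ψ 0 = 0) (hΨ1 : Ψ 1 = 1)
    (hΦΨ : ∀ x ∈ Set.Icc (0:ℝ) 1, Φ (Ψ x) = x ∧ Ψ (Φ x) = x)
    (V : ℝ → ℝ)
    (hV : ∀ u, V u = if u ≤ δ then (1 - u) - (1 - δ) * Ψ (u / δ)
      else u - δ * Φ ((1 - u) / (1 - δ))) :
    μ.map (fun ω => V (U ω)) = volume.restrict (Set.Ioo (0:ℝ) 1) := by
  obtain ⟨hδ0, hδ1⟩ := hδ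
  have h1δ : (0:ℝ) < 1 - δ := by linarith
  -- basic facts about Ψ and Φ
  have hΨm : MonotoneOn Ψ (Icc 0 1) := hΨmono.monotoneOn
  have hΨmem : ∀ t ∈ Icc (0:ℝ) 1, Ψ t ∈ Icc (0:ℝ) 1 := by
    intro t ht
    constructor
    · have := hΨm (left_mem_Icc.2 zero_le_one) ht ht.1
      rwa [hΨ0] at this
    · have := hΨm ht (right_mem_Icc.2 zero_le_one) ht.2
      rwa [hΨ1] at this
  have hΦ0 : Φ 0 = 0 := by
    have := (hΦΨ 0 (left_mem_Icc.2 zero_le_one)).1; rwa [hΨ0] at this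
  have hΦ1 : Φ 1 = 1 := by
    have := (hΦΨ 1 (right_mem_Icc.2 zero_le_one)).1; rwa [hΨ1] at this
  have hΦmem : ∀ x ∈ Icc (0:ℝ) 1, Φ x ∈ Icc (0:ℝ) 1 := by
    intro x hx
    obtain ⟨t, ht, hΨt⟩ := intermediate_value_Icc zero_le_one hΨc.continuousOn
      (by rw [hΨ0, hΨ1]; exact hx)
    have : Φ x = t := by rw [← hΨt]; exact (hΦΨ t ht).1
    rw [this]; exact ht
  have hΨΦ : ∀ x ∈ Icc (0:ℝ) 1, Ψ (Φ x) = x := fun x hx => (hΦΨ x hx).2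
  have hΦm : MonotoneOn Φ (Icc 0 1) := by
    intro x hx y hy hxy
    by_contra hc
    push_neg at hc
    have := hΨmono (hΦmem y hy) (hΦmem x hx) hc
    rw [hΨΦ x hx, hΨΦ y hy] at this
    linarith
  -- the two branches
  set gl : ℝ → ℝ := fun u => (1 - u) - (1 - δ) * Ψ (u / δ) with hgl_def
  set gr : ℝ → ℝ := fun u => u - δ * Φ ((1 - u) / (1 - δ)) with hgr_def
  have hmemL : ∀ u ∈ Icc (0:ℝ) δ, u / δ ∈ Icc (0:ℝ) 1 := fun u hu =>
    ⟨div_nonneg hu.1 hδ0.le, (div_le_one hδ0).2 hu.2⟩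
  have hmemR : ∀ u ∈ Icc δ (1:ℝ), (1 - u) / (1 - δ) ∈ Icc (0:ℝ) 1 := fun u hu =>
    ⟨div_nonneg (by linarith [hu.2]) h1δ.le, (div_le_one h1δ).2 (by linarith [hu.1])⟩
  have hglA : StrictAntiOn gl (Icc 0 δ) := by
    intro u hu v hv huv
    have h1 : Ψ (u / δ) ≤ Ψ (v / δ) :=
      hΨm (hmemL u hu) (hmemL v hv) (by gcongr)
    have h2 : (1 - δ) * Ψ (u / δ) ≤ (1 - δ) * Ψ (v / δ) :=
      mul_le_mul_of_nonneg_left h1 h1δ.le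
    simp only [hgl_def]
    linarith
  have hgrM : StrictMonoOn gr (Icc δ 1) := by
    intro u hu v hv huv
    have h0 : (1 - v) / (1 - δ) ≤ (1 - u) / (1 - δ) := by gcongr <;> linarith
    have h1 : Φ ((1 - v) / (1 - δ)) ≤ Φ ((1 - u) / (1 - δ)) :=
      hΦm (hmemR v hv) (hmemR u hu) h0
    have h2 : δ * Φ ((1 - v) / (1 - δ)) ≤ δ * Φ ((1 - u) / (1 - δ)) :=
      mul_le_mul_of_nonneg_left h1 hδ0.le
    simp only [hgr_def]
    linarith
  have hgl0 : gl 0 = 1 := by simp [hgl_def, hΨ0]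
  have hglδ : gl δ = 0 := by simp [hgl_def, div_self hδ0.ne', hΨ1]
  have hgrδ : gr δ = 0 := by simp [hgr_def, div_self h1δ.ne', hΦ1]
  have hgr1 : gr 1 = 1 := by simp [hgr_def, hΦ0]
  have hVeq : V = fun u => if u ≤ δ then gl u else gr u := funext hV
  have hglc : Continuous gl := by
    exact (continuous_const.sub continuous_id).sub
      (continuous_const.mul (hΨc.comp (continuous_id.div_const δ)))
  have hgrc : Continuous gr := by
    exact continuous_id.sub (continuous_const.mul
      (hΦc.comp ((continuous_const.sub continuous_id).div_const (1 - δ))))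
  have hVm : Measurable V := by
    rw [hVeq]
    exact Measurable.ite measurableSet_Iic hglc.measurable hgrc.measurable
  have hmap : (fun ω => V (U ω)) = V ∘ U := rfl
  rw [hmap, ← Measure.map_map hVm hU, hUunif]
  haveI hfin : IsFiniteMeasure (volume.restrict (Ioo (0:ℝ) 1)) :=
    ⟨by simp [Real.volume_Ioo]⟩
  refine Measure.ext_of_Iic _ _ (fun x => ?_)
  rw [Measure.map_apply hVm measurableSet_Iic,
    Measure.restrict_apply (hVm measurableSet_Iic),
    Measure.restrict_apply measurableSet_Iic]
  rcases le_or_gt x 0 with hx0 | hx0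
  · -- x ≤ 0 : both sides are 0
    have hR : Iic x ∩ Ioo (0:ℝ) 1 = ∅ := by
      ext u
      simp only [mem_inter_iff, mem_Iic, mem_Ioo, mem_empty_iff_false, iff_false, not_and]
      intro h1 h2
      linarith
    rw [hR, measure_empty]
    refine measure_mono_null (fun u hu => ?_) (measure_singleton δ)
    obtain ⟨huV, hu0, hu1⟩ := hu
    simp only [mem_preimage, mem_Iic, hVeq] at huV
    simp only [mem_singleton_iff]
    by_contra hne
    by_cases huδ : u ≤ δ
    · rw [if_pos huδ] at huV
      have hΨle : Ψ (u / δ) ≤ 1 := (hΨmem _ (hmemL u ⟨hu0.le, huδ⟩)).2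
      have huV' : 1 - u - (1 - δ) * Ψ (u / δ) ≤ x := huV
      have : u < δ := lt_of_le_of_ne huδ hne
      nlinarith
    · push_neg at huδ
      rw [if_neg (not_le.2 huδ)] at huV
      have hΦle : Φ ((1 - u) / (1 - δ)) ≤ 1 :=
        (hΦmem _ (hmemR u ⟨huδ.le, hu1.le⟩)).2
      have huV' : u - δ * Φ ((1 - u) / (1 - δ)) ≤ x := huV
      nlinarith
  rcases le_or_gt 1 x with hx1 | hx1
  · -- x ≥ 1 : both sides are the whole interval
    have hR : Iic x ∩ Ioo (0:ℝ) 1 = Ioo 0 1 := by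
      ext u
      simp only [mem_inter_iff, mem_Iic, mem_Ioo, and_iff_right_iff_imp]
      intro hu
      linarith [hu.2]
    have hL : V ⁻¹' Iic x ∩ Ioo (0:ℝ) 1 = Ioo 0 1 := by
      ext u
      simp only [mem_inter_iff, mem_preimage, mem_Iic, mem_Ioo, and_iff_right_iff_imp, hVeq]
      intro hu
      by_cases huδ : u ≤ δ
      · rw [if_pos huδ]
        have hΨge : 0 ≤ Ψ (u / δ) := (hΨmem _ (hmemL u ⟨hu.1.le, huδ⟩)).1
        simp only [hgl_def]
        nlinarith
      · push_neg at huδ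
        rw [if_neg (not_le.2 huδ)]
        have hΦge : 0 ≤ Φ ((1 - u) / (1 - δ)) :=
          (hΦmem _ (hmemR u ⟨huδ.le, hu.2.le⟩)).1
        simp only [hgr_def]
        nlinarith
    rw [hR, hL]
  -- main case : 0 < x < 1
  · obtain ⟨a, ha, hga⟩ : ∃ a ∈ Icc (0:ℝ) δ, gl a = x := by
      have hsub := intermediate_value_Icc' hδ0.le hglc.continuousOn
      have : x ∈ Icc (gl δ) (gl 0) := by rw [hglδ, hgl0]; exact ⟨hx0.le, hx1.le⟩
      exact hsub this
    have ha0 : 0 < a := by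
      rcases lt_of_le_of_ne ha.1 (fun hc => by rw [← hc, hgl0] at hga; linarith) with h
      exact h
    have haδ : a < δ := by
      rcases lt_of_le_of_ne ha.2 (fun hc => by rw [hc, hglδ] at hga; linarith) with h
      exact h
    set b : ℝ := a + x with hb_def
    have hs0 : 0 < Ψ (a / δ) := by
      have := hΨmono (left_mem_Icc.2 zero_le_one) (hmemL a ha) (by positivity)
      rwa [hΨ0] at this
    have hs1 : Ψ (a / δ) < 1 := by
      have := hΨmono (hmemL a ha) (right_mem_Icc.2 zero_le_one) ((div_lt_one hδ0).2 haδ)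
      rwa [hΨ1] at this
    have hgaval : (1 - a) - (1 - δ) * Ψ (a / δ) = x := hga
    have hbeq : b = 1 - (1 - δ) * Ψ (a / δ) := by
      simp only [hb_def]; linarith
    have hbδ : δ < b := by nlinarith
    have hb1 : b < 1 := by nlinarith
    have hgrb : gr b = x := by
      have hfrac : (1 - b) / (1 - δ) = Ψ (a / δ) := by
        rw [hbeq]; field_simp; ring
      simp only [hgr_def]
      rw [hfrac, (hΦΨ (a / δ) (hmemL a ha)).1, mul_div_cancel₀ a hδ0.ne']
      simp only [hb_def]; ring
    have hset : V ⁻¹' Iic x ∩ Ioo (0:ℝ) 1 = Icc a b := by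
      ext u
      simp only [mem_inter_iff, mem_preimage, mem_Iic, mem_Ioo, mem_Icc, hVeq]
      constructor
      · rintro ⟨hVu, hu0, hu1⟩
        by_cases huδ : u ≤ δ
        · rw [if_pos huδ] at hVu
          refine ⟨?_, by linarith⟩
          have := (hglA.le_iff_ge ⟨hu0.le, huδ⟩ ha).1 (by rw [hga]; exact hVu)
          exact this
        · push_neg at huδ
          rw [if_neg (not_le.2 huδ)] at hVu
          refine ⟨by linarith, ?_⟩
          exact (hgrM.le_iff_le ⟨huδ.le, hu1.le⟩ ⟨hbδ.le, hb1.le⟩).1 (by rw [hgrb]; exact hVu)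
      · rintro ⟨hau, hub⟩
        refine ⟨?_, by linarith, by linarith⟩
        by_cases huδ : u ≤ δ
        · rw [if_pos huδ]
          have := (hglA.le_iff_ge ⟨by linarith, huδ⟩ ha).2 hau
          rwa [hga] at this
        · push_neg at huδ
          rw [if_neg (not_le.2 huδ)]
          have := (hgrM.le_iff_le ⟨huδ.le, by linarith⟩ ⟨hbδ.le, hb1.le⟩).2 hub
          rwa [hgrb] at this
    have hR : Iic x ∩ Ioo (0:ℝ) 1 = Ioc 0 x := by
      ext u
      simp only [mem_inter_iff, mem_Iic, mem_Ioo, mem_Ioc]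
      constructor
      · rintro ⟨h1, h2, h3⟩; exact ⟨h2, h1⟩
      · rintro ⟨h1, h2⟩; exact ⟨h2, h1, by linarith⟩
    rw [hset, hR, Real.volume_Icc, Real.volume_Ioc]
    congr 1
    simp only [hb_def]
    ring
end

section
/- Let C* be the spherical t copula C_ν^t (a copula) and define C^{|t|}_ν(u,v) = 4 C_ν^t((1+u)/2, (1+v)/2) - u - v - 1. If C_ν^t is jointly symmetric, then C^{|t|}_ν is itself a copula; more generally, for any jointly symmetric copula C, the function D(u,v) = 4C((1+u)/2,(1+v)/2) - u - v - 1 is a copula. -/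
/-- For any jointly symmetric copula `C` (satisfying `C(u,v) = u - C(u,1-v)` and
`C(u,v) = v - C(1-u,v)`), the function `D(u,v) = 4C((1+u)/2,(1+v)/2) - u - v - 1`
is a copula.  In particular, this applies to the spherical t copula and yields the
absolute spherical t copula. -/
theorem absolute_copula_is_copula
    (C : ℝ → ℝ → ℝ) (hC : IsCopula C)
    (hsym : ∀ u ∈ Set.Icc (0:ℝ) 1, ∀ v ∈ Set.Icc (0:ℝ) 1,
      C u v = u - C u (1 - v) ∧ C u v = v - C (1 - u) v)
    (D : ℝ → ℝ → ℝ)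
    (hD : ∀ u v, D u v = 4 * C ((1 + u) / 2) ((1 + v) / 2) - u - v - 1) :
    IsCopula D := by
  obtain ⟨hb, h2⟩ := hC
  have hhalf : (1/2 : ℝ) ∈ Set.Icc (0:ℝ) 1 := by constructor <;> norm_num
  have hmem : ∀ u ∈ Set.Icc (0:ℝ) 1, (1 + u) / 2 ∈ Set.Icc (0:ℝ) 1 := by
    rintro u ⟨h0, h1⟩; constructor <;> [linarith; linarith]
  -- C(a, 1/2) = a/2 for a ∈ [0,1]
  have hC12 : ∀ a ∈ Set.Icc (0:ℝ) 1, C a (1/2) = a / 2 := by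
    intro a ha
    have := (hsym a ha (1/2) hhalf).1
    norm_num at this
    linarith
  have hC12' : ∀ a ∈ Set.Icc (0:ℝ) 1, C (1/2) a = a / 2 := by
    intro a ha
    have := (hsym (1/2) hhalf a ha).2
    norm_num at this
    linarith
  constructor
  · intro u hu
    have hm := hmem u hu
    have e1 : (1 + (0:ℝ)) / 2 = 1/2 := by norm_num
    have e2 : (1 + (1:ℝ)) / 2 = 1 := by norm_num
    refine ⟨?_, ?_, ?_, ?_⟩
    · rw [hD, e1, hC12 _ hm]; ring
    · rw [hD, e1, hC12' _ hm]; ring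
    · rw [hD, e2, (hb _ hm).2.2.1]; ring
    · rw [hD, e2, (hb _ hm).2.2.2]; ring
  · intro u₁ hu₁ u₂ hu₂ v₁ hv₁ v₂ hv₂ hu hv
    have key := h2 _ (hmem u₁ hu₁) _ (hmem u₂ hu₂) _ (hmem v₁ hv₁) _ (hmem v₂ hv₂)
      (by linarith) (by linarith)
    rw [hD, hD, hD, hD]
    linarith
end

section
/- Let C* be a copula with density c*, and let V(·;δ_1), V(·;δ_2) be linear v-transforms. Then the function C(u,v) = δ_1^{1{u≤δ_1}}(δ_1-1)^{1{u>δ_1}} δ_2^{1{v≤δ_2}}(δ_2-1)^{1{v>δ_2}} C*(V(u;δ_1), V(v;δ_2)) + δ_1 v + δ_2 u - δ_1 δ_2 satisfies the copula boundary conditions C(0,v) = 0 and C(1,v) = v for all v ∈ [0,1], and symmetrically C(u,0) = 0 and C(u,1) = u. -/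
/-- The linear v-transform with fulcrum `δ`. -/
noncomputable def linearVTransform (δ u : ℝ) : ℝ :=
  if u ≤ δ then (δ - u) / δ else (u - δ) / (1 - δ)

/-- The sign coefficient `δ^{1{u≤δ}} (δ-1)^{1{u>δ}}`. -/
noncomputable def signCoeff (δ u : ℝ) : ℝ := if u ≤ δ then δ else δ - 1

lemma vmem {δ : ℝ} (hδ : δ ∈ Set.Ioo (0:ℝ) 1) {u : ℝ} (hu : u ∈ Set.Icc (0:ℝ) 1) :
    linearVTransform δ u ∈ Set.Icc (0:ℝ) 1 := by
  unfold linearVTransform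
  obtain ⟨h0, h1⟩ := hδ
  obtain ⟨hu0, hu1⟩ := hu
  split_ifs with h
  · constructor
    · apply div_nonneg <;> linarith
    · rw [div_le_one h0]; linarith
  · constructor
    · apply div_nonneg <;> linarith
    · rw [div_le_one (by linarith)]; linarith

lemma v_zero {δ : ℝ} (hδ : δ ∈ Set.Ioo (0:ℝ) 1) : linearVTransform δ 0 = 1 := by
  unfold linearVTransform
  rw [if_pos hδ.1.le, sub_zero, div_self hδ.1.ne']

lemma v_one {δ : ℝ} (hδ : δ ∈ Set.Ioo (0:ℝ) 1) : linearVTransform δ 1 = 1 := by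
  unfold linearVTransform
  rw [if_neg (by linarith [hδ.2]), div_self (by linarith [hδ.2])]

/-- The copula constructed from a copula `C*` and two linear v-transforms satisfies the
copula boundary conditions `C(0,v) = 0`, `C(1,v) = v`, `C(u,0) = 0` and `C(u,1) = u`. -/
theorem linear_inverse_vtransform_copula_boundary
    (Cstar : ℝ → ℝ → ℝ) (hCstar : IsCopula Cstar)
    (δ₁ δ₂ : ℝ) (hδ₁ : δ₁ ∈ Set.Ioo (0:ℝ) 1) (hδ₂ : δ₂ ∈ Set.Ioo (0:ℝ) 1)
    (C : ℝ → ℝ → ℝ)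
    (hC : ∀ u v, C u v = signCoeff δ₁ u * signCoeff δ₂ v *
        Cstar (linearVTransform δ₁ u) (linearVTransform δ₂ v)
        + δ₁ * v + δ₂ * u - δ₁ * δ₂) :
    (∀ v ∈ Set.Icc (0:ℝ) 1, C 0 v = 0 ∧ C 1 v = v) ∧
    (∀ u ∈ Set.Icc (0:ℝ) 1, C u 0 = 0 ∧ C u 1 = u) := by
  have h01 := hδ₁.1; have h02 := hδ₁.2
  have h03 := hδ₂.1; have h04 := hδ₂.2
  have hne1 : (1:ℝ) - δ₁ ≠ 0 := by linarith
  have hne2 : (1:ℝ) - δ₂ ≠ 0 := by linarith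
  constructor
  · intro v hv
    have h1 : Cstar 1 (linearVTransform δ₂ v) = linearVTransform δ₂ v :=
      (hCstar.1 _ (vmem hδ₂ hv)).2.2.2
    constructor
    · rw [hC, v_zero hδ₁, h1, show signCoeff δ₁ 0 = δ₁ from if_pos h01.le]
      unfold signCoeff linearVTransform
      split_ifs with h
      · field_simp; ring
      · field_simp; ring
    · rw [hC, v_one hδ₁, h1, show signCoeff δ₁ 1 = δ₁ - 1 from if_neg (by linarith)]
      unfold signCoeff linearVTransform
      split_ifs with h
      · field_simp; ring
      · field_simp; ring
  · intro u hu
    have h1 : Cstar (linearVTransform δ₁ u) 1 = linearVTransform δ₁ u :=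
      (hCstar.1 _ (vmem hδ₁ hu)).2.2.1
    constructor
    · rw [hC, v_zero hδ₂, h1, show signCoeff δ₂ 0 = δ₂ from if_pos h03.le]
      unfold signCoeff linearVTransform
      split_ifs with h
      · field_simp; ring
      · field_simp; ring
    · rw [hC, v_one hδ₂, h1, show signCoeff δ₂ 1 = δ₂ - 1 from if_neg (by linarith)]
      unfold signCoeff linearVTransform
      split_ifs with h
      · field_simp; ring
      · field_simp; ring
end

section
/- Let C* be a copula with continuous partial derivatives h_1*, h_2*, and let C be the copula constructed from C* via two linear v-transforms V(·;δ_1), V(·;δ_2) as C(u,v) = δ_1^{1{u≤δ_1}}(δ_1-1)^{1{u>δ_1}} δ_2^{1{v≤δ_2}}(δ_2-1)^{1{v>δ_2}} C*(V(u;δ_1),V(v;δ_2)) + δ_1 v + δ_2 u - δ_1δ_2. Then its partial derivative h_1(u,v) = ∂C/∂u satisfies the identity V(h_1(u,v); δ_2) = h_1*(V(u;δ_1), V(v;δ_2)) for all u ≠ δ_1 and v ∈ [0,1]. -/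
lemma vtransform_mem {δ u : ℝ} (hδ : δ ∈ Set.Ioo (0:ℝ) 1) (hu : u ∈ Set.Icc (0:ℝ) 1) :
    linearVTransform δ u ∈ Set.Icc (0:ℝ) 1 := by
  obtain ⟨hδ0, hδ1⟩ := hδ
  obtain ⟨hu0, hu1⟩ := hu
  unfold linearVTransform
  rcases le_or_gt u δ with h | h
  · rw [if_pos h]
    constructor
    · exact div_nonneg (by linarith) hδ0.le
    · rw [div_le_one hδ0]; linarith
  · rw [if_neg (not_le.2 h)]
    constructor
    · exact div_nonneg (by linarith) (by linarith)
    · rw [div_le_one (by linarith)]; linarith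

/-- For the copula `C` built from a copula `C*` and two linear v-transforms, the first
h-function `h₁(u,v) = ∂C/∂u` satisfies `V(h₁(u,v); δ₂) = h₁*(V(u;δ₁), V(v;δ₂))` for all
`u ≠ δ₁`. -/
theorem hfunction_vtransform_identity
    (Cstar : ℝ → ℝ → ℝ) (hCstar : IsCopula Cstar)
    (h₁star : ℝ → ℝ → ℝ)
    (hderiv : ∀ v ∈ Set.Icc (0:ℝ) 1, ∀ u ∈ Set.Icc (0:ℝ) 1,
      HasDerivAt (fun s => Cstar s v) (h₁star u v) u)
    (hrange : ∀ u ∈ Set.Icc (0:ℝ) 1, ∀ v ∈ Set.Icc (0:ℝ) 1, h₁star u v ∈ Set.Icc (0:ℝ) 1)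
    (δ₁ δ₂ : ℝ) (hδ₁ : δ₁ ∈ Set.Ioo (0:ℝ) 1) (hδ₂ : δ₂ ∈ Set.Ioo (0:ℝ) 1)
    (C : ℝ → ℝ → ℝ)
    (hC : ∀ u v, C u v = signCoeff δ₁ u * signCoeff δ₂ v *
        Cstar (linearVTransform δ₁ u) (linearVTransform δ₂ v)
        + δ₁ * v + δ₂ * u - δ₁ * δ₂) :
    ∀ u ∈ Set.Icc (0:ℝ) 1, u ≠ δ₁ → ∀ v ∈ Set.Icc (0:ℝ) 1,
      linearVTransform δ₂ (deriv (fun s => C s v) u)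
        = h₁star (linearVTransform δ₁ u) (linearVTransform δ₂ v) := by
  obtain ⟨hδ₁0, hδ₁1⟩ := hδ₁
  obtain ⟨hδ₂0, hδ₂1⟩ := hδ₂
  intro u hu hne v hv
  set Vu := linearVTransform δ₁ u with hVu
  set Vv := linearVTransform δ₂ v with hVv
  have hVu_mem : Vu ∈ Set.Icc (0:ℝ) 1 := vtransform_mem ⟨hδ₁0, hδ₁1⟩ hu
  have hVv_mem : Vv ∈ Set.Icc (0:ℝ) 1 := vtransform_mem ⟨hδ₂0, hδ₂1⟩ hv
  set h := h₁star Vu Vv with hh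
  obtain ⟨hh0, hh1⟩ := hrange Vu hVu_mem Vv hVv_mem
  set K := signCoeff δ₂ v with hK
  -- Step 1: compute the derivative.
  have houter : HasDerivAt (fun s => Cstar s Vv) h Vu := hderiv Vv hVv_mem Vu hVu_mem
  have hD : deriv (fun s => C s v) u = -K * h + δ₂ := by
    rcases lt_or_gt_of_ne hne with hlt | hgt
    · -- u < δ₁
      have hVu_eq : Vu = (δ₁ - u) / δ₁ := by
        rw [hVu]; unfold linearVTransform; rw [if_pos hlt.le]
      have hinner : HasDerivAt (fun s : ℝ => (δ₁ - s) / δ₁) (-δ₁⁻¹) u := by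
        have : HasDerivAt (fun s : ℝ => (δ₁ - s) * δ₁⁻¹) ((0 - 1) * δ₁⁻¹) u :=
          (((hasDerivAt_const u δ₁).sub (hasDerivAt_id u)).mul_const δ₁⁻¹)
        simpa [div_eq_mul_inv] using this
      have hcomp : HasDerivAt (fun s : ℝ => Cstar ((δ₁ - s) / δ₁) Vv) (h * (-δ₁⁻¹)) u := by
        have := HasDerivAt.comp u (hVu_eq ▸ houter) hinner
        simpa [Function.comp_def] using this
      have hfull : HasDerivAt
          (fun s : ℝ => δ₁ * K * Cstar ((δ₁ - s) / δ₁) Vv + δ₁ * v + δ₂ * s - δ₁ * δ₂)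
          (-K * h + δ₂) u := by
        have : HasDerivAt
            (fun s : ℝ => δ₁ * K * Cstar ((δ₁ - s) / δ₁) Vv + δ₁ * v + δ₂ * s - δ₁ * δ₂)
            (δ₁ * K * (h * (-δ₁⁻¹)) + 0 + δ₂ * 1 - 0) u := by
          exact (((hcomp.const_mul (δ₁ * K)).add (hasDerivAt_const u (δ₁ * v))).add
            ((hasDerivAt_id u).const_mul δ₂)).sub (hasDerivAt_const u (δ₁ * δ₂))
        convert this using 1
        field_simp
        ring
      have heq : (fun s => C s v) =ᶠ[nhds u]
          (fun s : ℝ => δ₁ * K * Cstar ((δ₁ - s) / δ₁) Vv + δ₁ * v + δ₂ * s - δ₁ * δ₂) := by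
        filter_upwards [Iio_mem_nhds hlt] with s hs
        rw [hC s v, ← hK, ← hVv]
        have hs' : s ≤ δ₁ := le_of_lt hs
        unfold signCoeff linearVTransform
        rw [if_pos hs', if_pos hs']
      rw [heq.deriv_eq]
      exact hfull.deriv
    · -- u > δ₁
      have hVu_eq : Vu = (u - δ₁) / (1 - δ₁) := by
        rw [hVu]; unfold linearVTransform; rw [if_neg (not_le.2 hgt)]
      have hinner : HasDerivAt (fun s : ℝ => (s - δ₁) / (1 - δ₁)) ((1 - δ₁)⁻¹) u := by
        have : HasDerivAt (fun s : ℝ => (s - δ₁) * (1 - δ₁)⁻¹) ((1 - 0) * (1 - δ₁)⁻¹) u :=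
          (((hasDerivAt_id u).sub (hasDerivAt_const u δ₁)).mul_const (1 - δ₁)⁻¹)
        simpa [div_eq_mul_inv] using this
      have hcomp : HasDerivAt (fun s : ℝ => Cstar ((s - δ₁) / (1 - δ₁)) Vv)
          (h * (1 - δ₁)⁻¹) u := by
        have := HasDerivAt.comp u (hVu_eq ▸ houter) hinner
        simpa [Function.comp_def] using this
      have hfull : HasDerivAt
          (fun s : ℝ => (δ₁ - 1) * K * Cstar ((s - δ₁) / (1 - δ₁)) Vv + δ₁ * v + δ₂ * s - δ₁ * δ₂)
          (-K * h + δ₂) u := by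
        have : HasDerivAt
            (fun s : ℝ => (δ₁ - 1) * K * Cstar ((s - δ₁) / (1 - δ₁)) Vv + δ₁ * v + δ₂ * s - δ₁ * δ₂)
            ((δ₁ - 1) * K * (h * (1 - δ₁)⁻¹) + 0 + δ₂ * 1 - 0) u := by
          exact (((hcomp.const_mul ((δ₁ - 1) * K)).add (hasDerivAt_const u (δ₁ * v))).add
            ((hasDerivAt_id u).const_mul δ₂)).sub (hasDerivAt_const u (δ₁ * δ₂))
        convert this using 1
        have h1 : (1:ℝ) - δ₁ ≠ 0 := by linarith
        field_simp
        ring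
      have heq : (fun s => C s v) =ᶠ[nhds u]
          (fun s : ℝ => (δ₁ - 1) * K * Cstar ((s - δ₁) / (1 - δ₁)) Vv
            + δ₁ * v + δ₂ * s - δ₁ * δ₂) := by
        filter_upwards [Ioi_mem_nhds hgt] with s hs
        rw [hC s v, ← hK, ← hVv]
        have hs' : ¬ s ≤ δ₁ := not_le.2 hs
        unfold signCoeff linearVTransform
        rw [if_neg hs', if_neg hs']
      rw [heq.deriv_eq]
      exact hfull.deriv
  -- Step 2: apply the v-transform.
  rw [hD]
  unfold linearVTransform
  rcases le_or_gt v δ₂ with hv2 | hv2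
  · have hKeq : K = δ₂ := by rw [hK]; unfold signCoeff; rw [if_pos hv2]
    rw [hKeq]
    rw [if_pos (by nlinarith : -δ₂ * h + δ₂ ≤ δ₂)]
    field_simp
    ring
  · have hKeq : K = δ₂ - 1 := by rw [hK]; unfold signCoeff; rw [if_neg (not_le.2 hv2)]
    rw [hKeq]
    rcases le_or_gt (-(δ₂ - 1) * h + δ₂) δ₂ with hle | hgt
    · have hz : h = 0 := by nlinarith
      rw [if_pos hle, hz]
      simp
    · rw [if_neg (not_le.2 hgt)]
      have h2 : (1:ℝ) - δ₂ ≠ 0 := by linarith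
      field_simp
      ring
end
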